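/- arXiv:2109.01973 — 4 statements merged into one kernel-verified Lean document; each statement's English description precedes it below -/
import Mathlib

section
/- For every n ≥ δ + 2 and δ ≥ 1, the graph L_{n,δ} = K_1 ∨ (K_δ ∪ K_{n-δ-1}) has exactly (n-δ choose 2) + (δ+1 choose 2) edges and contains no Hamiltonian cycle. -/
open SimpleGraph

/-- `K_δ ∨ (K_{n-2δ+k} ∪ I_{δ-k})` on `Fin n`: vertices `< d` form the dominating
clique `K_d`, vertices in `[d, n-d+k)` form the clique, the rest are independent. -/
def Hgraph (n k d : ℕ) : SimpleGraph (Fin n) where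
  Adj u v := u ≠ v ∧ ((u : ℕ) < d ∨ (v : ℕ) < d ∨ ((u : ℕ) < n - d + k ∧ (v : ℕ) < n - d + k))
  symm := ⟨by intro u v h; exact ⟨h.1.symm, by tauto⟩⟩
  loopless := ⟨by intro u h; exact h.1 rfl⟩

/-- `K_{k+1} ∨ (K_{n-d-1} ∪ K_{d-k})` on `Fin n`: vertices `< k+1` form the dominating
clique, `[k+1, n-d+k)` forms `K_{n-d-1}`, `[n-d+k, n)` forms `K_{d-k}`. -/
def Lgraph (n k d : ℕ) : SimpleGraph (Fin n) where
  Adj u v := u ≠ v ∧ ((u : ℕ) < k + 1 ∨ (v : ℕ) < k + 1 ∨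
    ((u : ℕ) < n - d + k ∧ (v : ℕ) < n - d + k) ∨
    (n - d + k ≤ (u : ℕ) ∧ n - d + k ≤ (v : ℕ)))
  symm := ⟨by intro u v h; exact ⟨h.1.symm, by tauto⟩⟩
  loopless := ⟨by intro u h; exact h.1 rfl⟩

/-- `K_m ∪ I_{n-m}` on `Fin n`: vertices `< m` form a clique, the rest are isolated. -/
def KIgraph (n m : ℕ) : SimpleGraph (Fin n) where
  Adj u v := u ≠ v ∧ (u : ℕ) < m ∧ (v : ℕ) < m
  symm := ⟨by intro u v h; exact ⟨h.1.symm, h.2.2, h.2.1⟩⟩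
  loopless := ⟨by intro u h; exact h.1 rfl⟩

/-- Degree of a vertex, as the cardinality of its neighbour set. -/
noncomputable def deg {V : Type*} (G : SimpleGraph V) (v : V) : ℕ := (G.neighborSet v).ncard

/-- Number of edges of a graph. -/
noncomputable def eCount {V : Type*} (G : SimpleGraph V) : ℕ := G.edgeSet.ncard

open scoped Classical in
/-- Adjacency matrix over `ℝ`. -/
noncomputable def adjMat {V : Type*} [Fintype V] (G : SimpleGraph V) : Matrix V V ℝ :=
  fun u v => if G.Adj u v then 1 else 0

open scoped Classical in
/-- Signless Laplacian matrix `Q(G) = D(G) + A(G)` over `ℝ`. -/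
noncomputable def sLap {V : Type*} [Fintype V] (G : SimpleGraph V) : Matrix V V ℝ :=
  fun u v => (if u = v then (deg G u : ℝ) else 0) + (if G.Adj u v then 1 else 0)

/-- The largest (real) eigenvalue of a matrix. -/
noncomputable def maxEig {V : Type*} [Fintype V] (A : Matrix V V ℝ) : ℝ :=
  sSup {μ : ℝ | ∃ x : V → ℝ, x ≠ 0 ∧ A.mulVec x = μ • x}

/-- A graph is `k`-Hamiltonian if deleting any set of at most `k` vertices
leaves a Hamiltonian graph. -/
def IsKHamiltonian {n : ℕ} (G : SimpleGraph (Fin n)) (k : ℕ) : Prop :=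
  ∀ S : Finset (Fin n), S.card ≤ k →
    (G.induce ((↑(Sᶜ) : Set (Fin n)))).IsHamiltonian

/-- A graph is `k`-edge-Hamiltonian if every linear forest with at most `k` edges
(a set of edges forming vertex-disjoint paths) is contained in a Hamiltonian cycle. -/
def IsKEdgeHamiltonian {n : ℕ} (G : SimpleGraph (Fin n)) (k : ℕ) : Prop :=
  ∀ F : Set (Sym2 (Fin n)), F ⊆ G.edgeSet → F.ncard ≤ k →
    (SimpleGraph.fromEdgeSet F).IsAcyclic →
    (∀ v, ((SimpleGraph.fromEdgeSet F).neighborSet v).ncard ≤ 2) →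
    ∃ (a : Fin n) (p : G.Walk a a), p.IsHamiltonianCycle ∧ ∀ e ∈ F, e ∈ p.edges

/-- The `s`-closure of a graph: the smallest supergraph in which any two distinct
non-adjacent vertices have degree sum less than `s`. -/
noncomputable def closureGraph {V : Type*} (G : SimpleGraph V) (s : ℕ) : SimpleGraph V :=
  sInf {H | G ≤ H ∧ ∀ u v, u ≠ v → s ≤ deg H u + deg H v → H.Adj u v}

/-!
`L_{n,δ}` is the union of the complete graphs on `S = {v | v < n - δ}` and on `{0} ∪ Sᶜ`,
which share only the vertex `0`. The two cliques are edge-disjoint, which gives the edge count.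
Every edge avoiding `0` stays inside `S` or inside `Sᶜ`, so deleting `0` disconnects the graph;
but deleting a vertex from a Hamiltonian cycle leaves a path through all remaining vertices.
-/

namespace SimpleGraph

variable {V : Type*}

def cliqueOn (s : Set V) : SimpleGraph V where
  Adj u v := u ≠ v ∧ u ∈ s ∧ v ∈ s
  symm := ⟨fun _ _ h => ⟨h.1.symm, h.2.2, h.2.1⟩⟩
  loopless := ⟨fun _ h => h.1 rfl⟩

lemma cliqueOn_eq_map_top (s : Set V) :
    cliqueOn s = (⊤ : SimpleGraph s).map (Function.Embedding.subtype (· ∈ s)) := by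
  ext u v
  simp only [cliqueOn, map_adj, top_adj, Function.Embedding.subtype_apply]
  aesop

lemma ncard_edgeSet_cliqueOn [Finite V] (s : Set V) :
    (cliqueOn s).edgeSet.ncard = s.ncard.choose 2 := by
  classical
  have := Fintype.ofFinite s
  rw [cliqueOn_eq_map_top, edgeSet_map,
    Set.ncard_image_of_injective _ (Function.Embedding.injective _),
    Set.ncard_eq_toFinset_card', ← edgeFinset, card_edgeFinset_top_eq_card_choose_two,
    Set.ncard_eq_toFinset_card', Set.toFinset_card]

lemma ncard_edgeSet_sup [Finite V] {G H : SimpleGraph V} (h : Disjoint G H) :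
    (G ⊔ H).edgeSet.ncard = G.edgeSet.ncard + H.edgeSet.ncard := by
  rw [edgeSet_sup, Set.ncard_union_eq (disjoint_edgeSet.mpr h)]

lemma disjoint_cliqueOn {s t : Set V} (hst : (s ∩ t).Subsingleton) :
    Disjoint (cliqueOn s) (cliqueOn t) := by
  rw [disjoint_iff_inf_le]
  rintro u v ⟨⟨huv, hus, hvs⟩, -, hut, hvt⟩
  exact huv (hst ⟨hus, hut⟩ ⟨hvs, hvt⟩)

lemma ncard_edgeSet_cliqueOn_sup_cliqueOn_insert_compl [Finite V] {s : Set V} {c : V}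
    (hc : c ∈ s) :
    (cliqueOn s ⊔ cliqueOn (insert c sᶜ)).edgeSet.ncard
      = s.ncard.choose 2 + (sᶜ.ncard + 1).choose 2 := by
  have hst : (s ∩ insert c sᶜ).Subsingleton := by
    rw [Set.inter_insert_of_mem hc, Set.inter_compl_self, insert_empty_eq]
    exact Set.subsingleton_singleton
  rw [ncard_edgeSet_sup (disjoint_cliqueOn hst), ncard_edgeSet_cliqueOn, ncard_edgeSet_cliqueOn,
    Set.ncard_insert_of_notMem (Set.notMem_compl_iff.mpr hc)]

lemma Walk.iff_of_mem_support_of_notMem_support {G : SimpleGraph V} {P : V → Prop} {c : V}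
    (hP : ∀ x y, G.Adj x y → x ≠ c → y ≠ c → (P x ↔ P y)) {a b : V} (q : G.Walk a b)
    (hc : c ∉ q.support) : ∀ w ∈ q.support, P w ↔ P a := by
  induction q with
  | nil => simp
  | @cons a a' _ h q ih =>
    rw [Walk.support_cons, List.mem_cons, not_or] at hc
    have ha' : a' ≠ c := fun h => hc.2 (h ▸ q.start_mem_support)
    intro w hw
    rcases List.mem_cons.mp hw with rfl | hw
    · rfl
    · exact (ih hc.2 w hw).trans (hP _ _ h (Ne.symm hc.1) ha').symm

lemma not_isHamiltonian_of_separating_vertex [Fintype V] [DecidableEq V] {G : SimpleGraph V}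
    {P : V → Prop} {c u v : V} (hP : ∀ x y, G.Adj x y → x ≠ c → y ≠ c → (P x ↔ P y))
    (huc : u ≠ c) (hvc : v ≠ c) (hu : P u) (hv : ¬ P v) : ¬ G.IsHamiltonian := by
  intro hG
  have : Nontrivial V := ⟨u, c, huc⟩
  obtain ⟨p, hp⟩ := hG.exists_isHamiltonianCycle c
  -- `q` is a Hamiltonian path starting at `c`, so its tail avoids `c` and visits every other vertex
  set q := p.tail.reverse
  have hcount : ∀ w, q.support.count w = 1 := by
    intro w
    rw [Walk.support_reverse, List.count_reverse]
    exact hp.isHamiltonian_tail w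
  have hmem_q : ∀ w, w ∈ q.support := fun w => List.count_pos_iff.mp (by rw [hcount]; omega)
  have hq : ¬ q.Nil := fun h => huc (by simpa [Walk.nil_iff_support_eq.mp h] using hmem_q u)
  have hsupp := Walk.cons_support_tail hq
  have hc : c ∉ q.tail.support := by
    have := hcount c
    rw [← hsupp, List.count_cons_self] at this
    exact List.count_eq_zero.mp (by omega : q.tail.support.count c = 0)
  have hmem : ∀ w ≠ c, w ∈ q.tail.support := by
    intro w hw
    have := hmem_q w
    rw [← hsupp] at this
    exact (List.mem_cons.mp this).resolve_left hw
  have := Walk.iff_of_mem_support_of_notMem_support hP q.tail hc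
  exact hv ((this v (hmem v hvc)).mpr ((this u (hmem u huc)).mp hu))

lemma not_isHamiltonian_cliqueOn_sup_cliqueOn_insert_compl [Fintype V] [DecidableEq V]
    {s : Set V} {c u v : V} (hc : c ∈ s) (hu : u ∈ s) (huc : u ≠ c) (hv : v ∉ s) :
    ¬ (cliqueOn s ⊔ cliqueOn (insert c sᶜ)).IsHamiltonian := by
  refine not_isHamiltonian_of_separating_vertex (P := (· ∈ s)) ?_ huc
    (ne_of_mem_of_not_mem hc hv).symm hu hv
  rintro x y (⟨-, hx, hy⟩ | ⟨-, hx, hy⟩) hxc hyc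
  · exact iff_of_true hx hy
  · simp only [Set.mem_insert_iff, Set.mem_compl_iff, hxc, hyc, false_or] at hx hy
    exact iff_of_false hx hy

end SimpleGraph

lemma Lgraph_zero_eq_cliqueOn_sup (n d : ℕ) [NeZero n] (hdn : d < n) :
    Lgraph n 0 d = cliqueOn {v : Fin n | (v : ℕ) < n - d} ⊔
      cliqueOn (insert 0 {v : Fin n | (v : ℕ) < n - d}ᶜ) := by
  ext u v
  simp only [Lgraph, cliqueOn, sup_adj, Set.mem_ofPred_eq, Set.mem_insert_iff, Set.mem_compl_iff,
    Fin.ext_iff, Fin.val_zero]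
  omega

lemma ncard_setOf_val_lt (n m : ℕ) : {v : Fin n | (v : ℕ) < m}.ncard = min n m := by
  rw [Set.ncard_eq_toFinset_card', Set.toFinset_ofPred, Fin.card_filter_val_lt]

/-- `L_{n,δ} = K_1 ∨ (K_δ ∪ K_{n-δ-1})` has exactly `C(n-δ,2) + C(δ+1,2)` edges
and no Hamiltonian cycle, for `n ≥ δ + 2`, `δ ≥ 1`. -/
theorem stmt_2 (n d : ℕ) (hd : 1 ≤ d) (hn : d + 2 ≤ n) :
    eCount (Lgraph n 0 d) = (n - d).choose 2 + (d + 1).choose 2 ∧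
    ¬ (Lgraph n 0 d).IsHamiltonian := by
  have : NeZero n := ⟨by omega⟩
  set s := {v : Fin n | (v : ℕ) < n - d}
  have hs : s.ncard = n - d := by rw [ncard_setOf_val_lt]; omega
  have hsc : sᶜ.ncard = d := by
    rw [Set.ncard_compl, hs, Nat.card_eq_fintype_card, Fintype.card_fin]; omega
  have h0 : (0 : Fin n) ∈ s := show 0 < n - d by omega
  have h1 : (⟨1, by omega⟩ : Fin n) ∈ s := show 1 < n - d by omega
  have hlast : (⟨n - 1, by omega⟩ : Fin n) ∉ s := show ¬ n - 1 < n - d by omega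
  rw [Lgraph_zero_eq_cliqueOn_sup n d (by omega)]
  constructor
  · rw [eCount, ncard_edgeSet_cliqueOn_sup_cliqueOn_insert_compl h0, hs, hsc]
  · exact not_isHamiltonian_cliqueOn_sup_cliqueOn_insert_compl h0 h1 (by simp [Fin.ext_iff])
      hlast
end

section
/- For k ≥ 0, δ ≥ k+2, and n ≥ 2δ - k + 1, the graph H_{n,k,δ} = K_δ ∨ (K_{n-2δ+k} ∪ I_{δ-k}) has minimum degree exactly δ and is not k-Hamiltonian; in particular, deleting the k vertices of a suitable subset of the dominating clique K_δ leaves a graph with no Hamiltonian cycle. -/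
open SimpleGraph

/-!
Delete the first `k` vertices of the dominating clique. What is left of it, `D`, has `δ - k`
vertices, and so has the independent part `I`, whose vertices are adjacent only to `D`.
Along a Hamiltonian cycle every dart entering `I` comes from `D`; as `|I| = |D|` these are
all the darts leaving `D`, so the cycle never leaves `D ∪ I` and misses the (nonempty) clique
part `K_{n-2δ+k}`.
-/

open Finset SimpleGraph

namespace SimpleGraph

namespace Walk

variable {V : Type*} {G : SimpleGraph V} {a : V}

lemma map_fst_darts_perm_map_snd_darts (p : G.Walk a a) :
    (p.darts.map (·.fst)).Perm (p.darts.map (·.snd)) :=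
  (List.perm_cons a).1 <| (List.perm_append_singleton _ _).symm.trans <|
    List.Perm.of_eq <| by rw [map_fst_darts_append, cons_map_snd_darts]

variable [Fintype V] [DecidableEq V] {p : G.Walk a a}

lemma IsHamiltonianCycle.map_snd_darts_eq_univ (hp : p.IsHamiltonianCycle) :
    ((p.darts.map (·.snd) : List V) : Multiset V) = univ.val := by
  ext x
  rw [Multiset.coe_count, map_snd_darts, ← support_tail_of_not_nil p hp.not_nil,
    hp.isHamiltonian_tail x, Multiset.count_eq_one_of_mem univ.nodup (mem_univ x)]

lemma IsHamiltonianCycle.map_fst_darts_eq_univ (hp : p.IsHamiltonianCycle) :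
    ((p.darts.map (·.fst) : List V) : Multiset V) = univ.val :=
  (Multiset.coe_eq_coe.2 p.map_fst_darts_perm_map_snd_darts).trans hp.map_snd_darts_eq_univ

lemma card_filter_darts_of_map_eq_univ {f : G.Dart → V}
    (hf : ((p.darts.map f : List V) : Multiset V) = univ.val) (s : Finset V) :
    Multiset.card ((p.darts : Multiset G.Dart).filter (f · ∈ s)) = #s := by
  rw [← (Multiset.countP_map f _ (· ∈ s)), Multiset.map_coe, hf, Multiset.countP_eq_card_filter,
    ← filter_val, filter_mem_eq_inter, univ_inter]
  rfl

end Walk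

variable {V : Type*} [Fintype V] [DecidableEq V] {G : SimpleGraph V}

theorem IsHamiltonian.card_lt_card_of_neighborSet_subset (hG : G.IsHamiltonian)
    {A B : Finset V} (hAB : ∀ a ∈ A, G.neighborSet a ⊆ B) (hA : A.Nonempty) {y : V}
    (hyA : y ∉ A) (hyB : y ∉ B) : #A < #B := by
  obtain ⟨x, hx⟩ := hA
  have : Nontrivial V := ⟨x, y, fun h => hyA (h ▸ hx)⟩
  obtain ⟨p, hp⟩ := hG.exists_isHamiltonianCycle x
  by_contra! hBA
  set D : Multiset G.Dart := ↑p.darts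
  have hsub : D.filter (·.snd ∈ A) ≤ D.filter (·.fst ∈ B) :=
    Multiset.monotone_filter_right D fun d hd => hAB _ hd d.adj.symm
  have heq := Multiset.eq_of_le_of_card_le hsub (by
    rwa [Walk.card_filter_darts_of_map_eq_univ hp.map_snd_darts_eq_univ,
      Walk.card_filter_darts_of_map_eq_univ hp.map_fst_darts_eq_univ])
  have hclosed : ∀ d ∈ p.darts, d.fst ∈ A ∪ B → d.snd ∈ A ∪ B := by
    intro d hd hfst
    rcases mem_union.1 hfst with hfA | hfB
    · exact mem_union_right _ (hAB _ hfA d.adj)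
    · have hdB : d ∈ D.filter (·.fst ∈ B) := Multiset.mem_filter.2 ⟨hd, hfB⟩
      rw [← heq] at hdB
      exact mem_union_left _ (Multiset.mem_filter.1 hdB).2
  obtain ⟨d, hd, hfst, hsnd⟩ := (p.takeUntil y (hp.mem_support y)).exists_boundary_dart
    (↑(A ∪ B)) (by simp [hx]) (by simp [hyA, hyB])
  exact hsnd (hclosed d (p.darts_takeUntil_subset_darts _ hd) hfst)

end SimpleGraph

lemma Fin.card_filter_le_val_lt {n a b : ℕ} (hb : b ≤ n) :
    #{i : Fin n | a ≤ (i : ℕ) ∧ (i : ℕ) < b} = b - a := by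
  rw [← card_map Fin.valEmbedding, ← Nat.card_Ico a b]
  congr 1
  ext m
  simp only [mem_map, mem_filter, mem_univ, true_and, Fin.valEmbedding_apply, mem_Ico]
  exact ⟨fun ⟨i, hi, him⟩ => him ▸ hi, fun hm => ⟨⟨m, by omega⟩, hm, rfl⟩⟩

section Hgraph

variable {n k d : ℕ}

lemma Hgraph_adj_of_val_lt {u v : Fin n} (hu : (u : ℕ) < d) (hvu : v ≠ u) :
    (Hgraph n k d).Adj v u :=
  ⟨hvu, Or.inr (Or.inl hu)⟩

lemma Hgraph_adj_iff_of_le_val {u v : Fin n} (hv : n - d + k ≤ v) (hdv : d ≤ v) :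
    (Hgraph n k d).Adj v u ↔ (u : ℕ) < d := by
  simp only [Hgraph, ne_eq, Fin.ext_iff]
  omega

lemma le_deg_Hgraph (hn : d < n) (v : Fin n) : d ≤ deg (Hgraph n k d) v := by
  rw [deg]
  rcases lt_or_ge (v : ℕ) d with hv | hv
  · calc d ≤ n - 1 := by omega
      _ = #(univ.erase v) := by rw [card_erase_of_mem (mem_univ v), card_univ, Fintype.card_fin]
      _ ≤ _ := by
        rw [← Set.ncard_coe_finset]
        exact Set.ncard_le_ncard fun u hu => ⟨(mem_erase.1 hu).1.symm, Or.inl hv⟩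
  · calc d = #{u : Fin n | (u : ℕ) < d} := by rw [Fin.card_filter_val_lt]; omega
      _ ≤ _ := by
        rw [← Set.ncard_coe_finset]
        refine Set.ncard_le_ncard fun u hu => ?_
        have hu' : (u : ℕ) < d := by simpa using hu
        exact Hgraph_adj_of_val_lt hu' (Fin.ne_of_val_ne (by omega))

lemma deg_Hgraph_last (hkd : k < d) (hn : d < n) :
    deg (Hgraph n k d) ⟨n - 1, by omega⟩ = d := by
  have hN : (Hgraph n k d).neighborSet ⟨n - 1, by omega⟩ =
      (({u : Fin n | (u : ℕ) < d} : Finset (Fin n)) : Set (Fin n)) := by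
    ext u
    simpa using Hgraph_adj_iff_of_le_val (show n - d + k ≤ n - 1 by omega) (show d ≤ n - 1 by omega)
  rw [deg, hN, Set.ncard_coe_finset, Fin.card_filter_val_lt]
  omega

lemma Hgraph_induce_not_isHamiltonian (hkd : k < d) (hn : 2 * d - k < n) :
    ¬ ((Hgraph n k d).induce
      (↑(({i : Fin n | (i : ℕ) < k} : Finset (Fin n))ᶜ) : Set (Fin n))).IsHamiltonian := by
  set W : Set (Fin n) := ↑(({i : Fin n | (i : ℕ) < k} : Finset (Fin n))ᶜ)
  have hW : ∀ i : Fin n, i ∈ W ↔ k ≤ i := by simp [W]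
  have hcard : ∀ a b, k ≤ a → b ≤ n →
      #(({i : Fin n | a ≤ (i : ℕ) ∧ (i : ℕ) < b} : Finset (Fin n)).subtype (· ∈ W)) = b - a := by
    intro a b ha hb
    rw [card_subtype, filter_true_of_mem fun i hi => (hW i).2 (ha.trans (mem_filter.1 hi).2.1),
      Fin.card_filter_le_val_lt hb]
  intro hG
  have key := hG.card_lt_card_of_neighborSet_subset
    (A := ({i : Fin n | n - d + k ≤ (i : ℕ) ∧ (i : ℕ) < n} : Finset (Fin n)).subtype (· ∈ W))
    (B := ({i : Fin n | k ≤ (i : ℕ) ∧ (i : ℕ) < d} : Finset (Fin n)).subtype (· ∈ W))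
    (y := ⟨⟨d, by omega⟩, (hW _).2 hkd.le⟩) ?_ ?_ ?_ ?_
  · rw [hcard _ _ (by omega) le_rfl, hcard _ _ le_rfl (by omega)] at key
    omega
  · intro a ha u hu
    have ha' := (mem_filter.1 (mem_subtype.1 ha)).2.1
    exact mem_subtype.2 <| mem_filter.2
      ⟨mem_univ _, (hW u).1 u.2, (Hgraph_adj_iff_of_le_val ha' (by omega)).1 hu⟩
  · rw [← card_pos, hcard _ _ (by omega) le_rfl]
    omega
  · simpa using (show d < n - d + k by omega)
  · simp

end Hgraph

/-- `H_{n,k,δ}` has minimum degree exactly `δ` and is not `k`-Hamiltonian; in particular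
deleting a suitable set of `k` vertices of the dominating clique `K_δ` leaves a
graph with no Hamiltonian cycle. -/
theorem stmt_3 (n k d : ℕ) (hd : k + 2 ≤ d) (hn : 2 * d - k + 1 ≤ n) :
    (∀ v, d ≤ deg (Hgraph n k d) v) ∧ (∃ v, deg (Hgraph n k d) v = d) ∧
    ¬ IsKHamiltonian (Hgraph n k d) k ∧
    ∃ S : Finset (Fin n), S.card = k ∧ (∀ v ∈ S, (v : ℕ) < d) ∧
      ¬ ((Hgraph n k d).induce ((↑(Sᶜ) : Set (Fin n)))).IsHamiltonian := by
  have hS : ∃ S : Finset (Fin n), S.card = k ∧ (∀ v ∈ S, (v : ℕ) < d) ∧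
      ¬ ((Hgraph n k d).induce ((↑(Sᶜ) : Set (Fin n)))).IsHamiltonian :=
    ⟨({i : Fin n | (i : ℕ) < k} : Finset (Fin n)), by rw [Fin.card_filter_val_lt]; omega,
      fun v hv => (mem_filter.1 hv).2.trans_le (by omega),
      Hgraph_induce_not_isHamiltonian (by omega) (by omega)⟩
  refine ⟨le_deg_Hgraph (by omega), ⟨_, deg_Hgraph_last (by omega) (by omega)⟩, ?_, hS⟩
  intro hK
  obtain ⟨S, hSk, -, hSnot⟩ := hS
  exact hSnot (hK S hSk.le)
end

section
/- If G is a graph on n ≥ 2 vertices, then the largest eigenvalue q(G) of its signless Laplacian matrix satisfies q(G) ≤ 2·e(G)/(n-1) + n - 2. -/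
open SimpleGraph

/-!
Choosing the weights `w_v = d_v` in Gershgorin's circle theorem (i.e. applying it to `D⁻¹ Q D`)
gives `q(G) ≤ max_u (d_u + m_u)`, where `m_u` is the average degree of the neighbours of `u`.
Fix `u`, put `d = d_u` and `S = ∑_{v ~ u} d_v`. Besides `d + S ≤ 2e` and `S ≤ d (n - 1)`,
double counting the edges between `N(u)` and the non-neighbours of `u` gives
`2S + d ≤ d² + 2e`, and these constraints force `d + S / d ≤ 2e / (n - 1) + n - 2`.
-/

open Finset
open scoped Matrix

theorem Matrix.exists_abs_sub_diag_mul_le_sum_weighted {ι : Type*} [Fintype ι]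
    [DecidableEq ι] (A : Matrix ι ι ℝ) {w : ι → ℝ} (hw : ∀ i, 0 < w i) {μ : ℝ} {x : ι → ℝ}
    (hx : x ≠ 0) (hAx : A *ᵥ x = μ • x) :
    ∃ i, |μ - A i i| * w i ≤ ∑ j ∈ univ.erase i, |A i j| * w j := by
  set B := Matrix.diagonal w⁻¹ * A * Matrix.diagonal w
  have hB : B *ᵥ (w⁻¹ * x) = μ • (w⁻¹ * x) := by
    have hww : Matrix.diagonal w *ᵥ (w⁻¹ * x) = x := by
      ext i; simp [Matrix.mulVec_diagonal, (hw i).ne']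
    simp only [B, ← Matrix.mulVec_mulVec, hww, hAx, Matrix.mulVec_smul]
    ext i; simp [Matrix.mulVec_diagonal]
  have hne : w⁻¹ * x ≠ 0 := fun h => hx <| funext fun i => by
    simpa [(hw i).ne'] using congrFun h i
  obtain ⟨i, hi⟩ := eigenvalue_mem_ball (A := B) <| Module.End.hasEigenvalue_of_hasEigenvector
    ⟨Module.End.mem_eigenspace_iff.mpr hB, hne⟩
  refine ⟨i, ?_⟩
  rw [mem_closedBall_iff_norm', Real.norm_eq_abs, abs_sub_comm] at hi
  have hBij : ∀ j, ‖B i j‖ = |A i j| * w j / w i := fun j => by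
    simp [B, Matrix.diagonal_mul, Matrix.mul_diagonal, abs_of_pos (hw i), abs_of_pos (hw j)]
    field_simp
  have hBii : B i i = A i i := by simp [B, mul_comm _ (w i), (hw i).ne']
  simp only [hBij, ← Finset.sum_div, hBii] at hi
  exact (le_div_iff₀ (hw i)).mp hi

/-- `hgap` records that `n - 1 - d`, an integer in the application, does not lie in `(0, 1)`. -/
theorem add_div_le_two_mul_div_add_sub_two {d S e n : ℝ} (hd : 1 ≤ d) (hdn : d ≤ n - 1)
    (hgap : 0 ≤ (n - 1 - d) * (n - 2 - d)) (hS : S ≤ d * (n - 1)) (hB : d + S ≤ 2 * e)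
    (hA : 2 * S + d ≤ d ^ 2 + 2 * e) :
    d + S / d ≤ 2 * e / (n - 1) + n - 2 := by
  have hd0 : 0 < d := by linarith
  have hn1 : 0 < n - 1 := by linarith
  rw [← sub_nonneg]
  -- With `k = n - 1 - d`: if `k ≤ d`, average the bounds `hA` and `hB` on `e` with weights
  -- `k` and `d - k`, which cancels `S`; if `k > d`, use `hA` together with `hS`.
  have key : 0 ≤ d * ((2 * e + (n - 2) * (n - 1)) * d - (d ^ 2 + S) * (n - 1)) := by
    rcases le_total (n - 1 - d) d with hk | hk
    · nlinarith [mul_nonneg (by linarith : (0:ℝ) ≤ n - 1 - d)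
          (by linarith : 0 ≤ d ^ 2 + 2 * e - 2 * S - d),
        mul_nonneg (by linarith : (0:ℝ) ≤ d - (n - 1 - d)) (by linarith : 0 ≤ 2 * e - d - S),
        mul_nonneg (mul_nonneg hd0.le hd0.le) hgap]
    · nlinarith [mul_nonneg (by linarith : (0:ℝ) ≤ n - 1 - d - d)
          (by linarith : 0 ≤ d * (n - 1) - S),
        mul_nonneg (mul_nonneg hd0.le (by linarith : (0:ℝ) ≤ n - 1 - d))
          (by linarith : 0 ≤ d - 1),
        mul_nonneg hd0.le (by linarith : 0 ≤ d ^ 2 + 2 * e - 2 * S - d)]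
  have : 2 * e / (n - 1) + n - 2 - (d + S / d) =
      d * ((2 * e + (n - 2) * (n - 1)) * d - (d ^ 2 + S) * (n - 1)) / (d ^ 2 * (n - 1)) := by
    field_simp; ring
  rw [this]; positivity

namespace SimpleGraph

variable {V : Type*} [Fintype V] (G : SimpleGraph V) [DecidableRel G.Adj]

theorem sum_degree_neighbor_le (u : V) :
    ∑ v ∈ G.neighborFinset u, G.degree v ≤ G.degree u * (Fintype.card V - 1) := by
  rw [← card_neighborFinset_eq_degree G u, ← smul_eq_mul]
  exact sum_le_card_nsmul _ _ _ fun v _ => Nat.le_sub_one_of_lt (G.degree_lt_card_verts v)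

theorem deg_eq_degree (v : V) : deg G v = G.degree v := by
  rw [deg, ← card_neighborFinset_eq_degree, ← Set.ncard_coe_finset, coe_neighborFinset]

theorem eCount_eq_card_edgeFinset : eCount G = #G.edgeFinset := by
  rw [eCount, ← Set.ncard_coe_finset, coe_edgeFinset]

/-- The `m_u` of the literature; `0` at an isolated vertex, where it divides by zero. -/
noncomputable def avgNeighborDegree (u : V) : ℝ :=
  (∑ v ∈ G.neighborFinset u, G.degree v : ℝ) / G.degree u

variable [DecidableEq V]

theorem degree_le_degree_add_card_adj_compl_closedNbhd {u v : V} (huv : G.Adj u v) :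
    G.degree v ≤ G.degree u + #{w ∈ (insert u (G.neighborFinset u))ᶜ | G.Adj v w} := by
  set A := insert u (G.neighborFinset u)
  have hvA : v ∈ A := mem_insert_of_mem (by simpa using huv)
  have hcardA : #A = G.degree u + 1 := card_insert_of_notMem (by simp)
  have hsplit : G.neighborFinset v ⊆ A.erase v ∪ {w ∈ Aᶜ | G.Adj v w} := by
    intro w hw
    rw [mem_neighborFinset] at hw
    by_cases hwA : w ∈ A
    · exact mem_union_left _ (mem_erase.mpr ⟨hw.ne', hwA⟩)
    · exact mem_union_right _ (mem_filter.mpr ⟨mem_compl.mpr hwA, hw⟩)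
  calc G.degree v = #(G.neighborFinset v) := (card_neighborFinset_eq_degree G v).symm
    _ ≤ #(A.erase v) + #{w ∈ Aᶜ | G.Adj v w} :=
        (card_le_card hsplit).trans (card_union_le _ _)
    _ = G.degree u + #{w ∈ Aᶜ | G.Adj v w} := by rw [card_erase_of_mem hvA, hcardA]; rfl

theorem two_mul_sum_degree_neighbor_add_degree_le (u : V) :
    2 * ∑ v ∈ G.neighborFinset u, G.degree v + G.degree u ≤
      G.degree u ^ 2 + 2 * #G.edgeFinset := by
  set N := G.neighborFinset u
  set W := (insert u N)ᶜ
  have hhandshake :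
      G.degree u + ∑ v ∈ N, G.degree v + ∑ w ∈ W, G.degree w = 2 * #G.edgeFinset := by
    rw [← G.sum_degrees_eq_twice_card_edges, ← sum_add_sum_compl (insert u N),
      sum_insert (by simp [N])]
  have hN :
      ∑ v ∈ N, G.degree v ≤ G.degree u ^ 2 + ∑ v ∈ N, #(W.bipartiteAbove G.Adj v) := by
    calc ∑ v ∈ N, G.degree v ≤ ∑ v ∈ N, (G.degree u + #(W.bipartiteAbove G.Adj v)) :=
          sum_le_sum fun v hv =>
            G.degree_le_degree_add_card_adj_compl_closedNbhd (by simpa [N] using hv)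
      _ = G.degree u ^ 2 + ∑ v ∈ N, #(W.bipartiteAbove G.Adj v) := by
          rw [sum_add_distrib, sum_const, card_neighborFinset_eq_degree, smul_eq_mul, sq]
  have hW : ∑ v ∈ N, #(W.bipartiteAbove G.Adj v) ≤ ∑ w ∈ W, G.degree w := by
    rw [sum_card_bipartiteAbove_eq_sum_card_bipartiteBelow]
    refine sum_le_sum fun w _ => ?_
    rw [← card_neighborFinset_eq_degree]
    exact card_le_card fun v hv => by simpa [adj_comm] using (mem_filter.mp hv).2
  omega

theorem degree_add_sum_degree_neighbor_le (u : V) :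
    G.degree u + ∑ v ∈ G.neighborFinset u, G.degree v ≤ 2 * #G.edgeFinset := by
  calc _ = ∑ v ∈ insert u (G.neighborFinset u), G.degree v := (sum_insert (by simp)).symm
    _ ≤ ∑ v, G.degree v := sum_le_sum_of_subset (subset_univ _)
    _ = 2 * #G.edgeFinset := G.sum_degrees_eq_twice_card_edges

theorem sLap_apply (u v : V) :
    sLap G u v = (if u = v then (G.degree u : ℝ) else 0) + if G.Adj u v then 1 else 0 := by
  rcases eq_or_ne u v with rfl | h <;> simp [sLap, deg_eq_degree, *]

theorem exists_le_degree_add_avgNeighborDegree_of_sLap_mulVec_eq {μ : ℝ} {x : V → ℝ}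
    (hx : x ≠ 0) (hQx : sLap G *ᵥ x = μ • x) :
    ∃ u, μ ≤ G.degree u + G.avgNeighborDegree u := by
  set w : V → ℝ := fun v => max (G.degree v : ℝ) 1
  obtain ⟨u, hu⟩ := (sLap G).exists_abs_sub_diag_mul_le_sum_weighted (w := w)
    (fun v => lt_of_lt_of_le one_pos (le_max_right _ _)) hx hQx
  have hrow : ∑ v ∈ univ.erase u, |sLap G u v| * w v = ∑ v ∈ G.neighborFinset u, w v := by
    rw [neighborFinset_eq_filter, sum_filter,
      ← sum_erase univ (f := fun v => if G.Adj u v then w v else 0) (a := u) (by simp)]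
    refine sum_congr rfl fun v hv => ?_
    rw [sLap_apply, if_neg (ne_of_mem_erase hv).symm, zero_add]
    split_ifs <;> simp
  rw [hrow, sLap_apply, if_pos rfl, if_neg (G.irrefl), add_zero] at hu
  refine ⟨u, ?_⟩
  rcases Nat.eq_zero_or_pos (G.degree u) with hdu | hdu
  · have hN : G.neighborFinset u = ∅ := by
      rw [← card_eq_zero, card_neighborFinset_eq_degree, hdu]
    simp only [hN, hdu, sum_empty, w, Nat.cast_zero, sub_zero, max_eq_right zero_le_one,
      mul_one] at hu
    simpa [avgNeighborDegree, hdu] using (le_abs_self μ).trans hu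
  · have hd : (1 : ℝ) ≤ G.degree u := by exact_mod_cast hdu
    have hw : ∀ v ∈ G.neighborFinset u, w v = G.degree v := fun v hv => max_eq_left <| by
      exact_mod_cast (G.degree_pos_iff_exists_adj v).mpr
        ⟨u, ((G.mem_neighborFinset u v).mp hv).symm⟩
    rw [sum_congr rfl hw, show w u = G.degree u from max_eq_left hd,
      ← le_div_iff₀ (by linarith)] at hu
    rw [avgNeighborDegree]
    linarith [le_abs_self (μ - G.degree u)]

theorem degree_add_avgNeighborDegree_le (hn : 2 ≤ Fintype.card V) (u : V) :
    G.degree u + G.avgNeighborDegree u ≤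
      2 * (#G.edgeFinset : ℝ) / ((Fintype.card V : ℝ) - 1) + (Fintype.card V : ℝ) - 2 := by
  have hlt := G.degree_lt_card_verts u
  rcases Nat.eq_zero_or_pos (G.degree u) with hdu | hdu
  · have hn' : (2 : ℝ) ≤ Fintype.card V := by exact_mod_cast hn
    have : 0 ≤ 2 * (#G.edgeFinset : ℝ) / ((Fintype.card V : ℝ) - 1) :=
      div_nonneg (by positivity) (by linarith)
    simp only [avgNeighborDegree, hdu, Nat.cast_zero, div_zero, add_zero]
    linarith
  have hgap : 0 ≤ ((Fintype.card V : ℝ) - 1 - G.degree u) *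
      ((Fintype.card V : ℝ) - 2 - G.degree u) := by
    rcases (by omega : G.degree u + 1 = Fintype.card V ∨ G.degree u + 2 ≤ Fintype.card V)
      with h | h
    · have h' : (G.degree u : ℝ) + 1 = Fintype.card V := by exact_mod_cast h
      nlinarith
    · have h' : (G.degree u : ℝ) + 2 ≤ Fintype.card V := by exact_mod_cast h
      nlinarith
  refine add_div_le_two_mul_div_add_sub_two (by exact_mod_cast hdu) ?_ hgap ?_
    (by exact_mod_cast G.degree_add_sum_degree_neighbor_le u)
    (by exact_mod_cast G.two_mul_sum_degree_neighbor_add_degree_le u)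
  · have : (G.degree u : ℝ) + 1 ≤ Fintype.card V := by exact_mod_cast hlt
    linarith
  · have := G.sum_degree_neighbor_le u
    rw [← Nat.cast_one, ← Nat.cast_sub (by omega)]
    exact_mod_cast this

end SimpleGraph

/-- Feng–Yu bound: for a graph on `n ≥ 2` vertices,
`q(G) ≤ 2 e(G)/(n-1) + n - 2`. -/
theorem stmt_6 {V : Type*} [Fintype V] (G : SimpleGraph V) (hn : 2 ≤ Fintype.card V) :
    maxEig (sLap G) ≤
      2 * (eCount G : ℝ) / ((Fintype.card V : ℝ) - 1) + (Fintype.card V : ℝ) - 2 := by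
  classical
  obtain ⟨u₀⟩ : Nonempty V := Fintype.card_pos_iff.mp (by omega)
  rw [G.eCount_eq_card_edgeFinset]
  refine Real.sSup_le (fun μ ⟨x, hx, hQx⟩ => ?_) ?_
  · obtain ⟨u, hu⟩ := G.exists_le_degree_add_avgNeighborDegree_of_sLap_mulVec_eq hx hQx
    exact hu.trans (G.degree_add_avgNeighborDegree_le hn u)
  · refine le_trans ?_ (G.degree_add_avgNeighborDegree_le hn u₀)
    unfold avgNeighborDegree
    positivity
end

section
/- Let G be a connected graph with largest signless Laplacian eigenvalue q(G) and positive Perron eigenvector x (Q(G)x = q(G)x, x entrywise positive). Let u, v be vertices with x_u ≥ x_v, and let w_1,...,w_s be distinct vertices in N(v) \ (N(u) ∪ {u}) with 1 ≤ s ≤ deg(v). If G* is obtained from G by deleting the edges v w_i and adding the edges u w_i for all 1 ≤ i ≤ s, then q(G) < q(G*). -/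
open SimpleGraph

/-!
Write `S_c` for the star joining `c` to the vertices of `W`. Since `S_v ≤ G` and `S_u` is
edge-disjoint from `G`, `Q(G*) = Q(G) - Q(S_v) + Q(S_u)`, and
`xᵀ Q(S_c) x = Σ_{w ∈ W} (x_c + x_w)²`.
Hence `xᵀ Q(G*) x ≥ xᵀ Q(G) x = q(G) ‖x‖²`, so `q(G*) ≥ q(G)` by the Rayleigh principle. If equality
held, `x` would be an eigenvector of `Q(G*)` for `q(G)`; but
`(Q(G*) x)_u = q(G) x_u + Σ_{w ∈ W} (x_u + x_w) > q(G) x_u`.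
-/

namespace Matrix

variable {V : Type*} [Fintype V] [DecidableEq V]

theorem setOf_mulVec_eq_smul_eq_spectrum {K : Type*} [Field K] (A : Matrix V V K) :
    {μ : K | ∃ x : V → K, x ≠ 0 ∧ A *ᵥ x = μ • x} = spectrum K A := by
  ext μ
  rw [Set.mem_ofPred_eq, ← spectrum_toLin', ← Module.End.hasEigenvalue_iff_mem_spectrum,
    Module.End.hasEigenvalue_iff]
  simp only [Submodule.ne_bot_iff, Module.End.mem_eigenspace_iff, toLin'_apply]
  exact ⟨fun ⟨x, hx, h⟩ => ⟨x, h, hx⟩, fun ⟨x, h, hx⟩ => ⟨x, hx, h⟩⟩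

theorem le_maxEig_of_mem_spectrum {A : Matrix V V ℝ} {μ : ℝ} (hμ : μ ∈ spectrum ℝ A) :
    μ ≤ maxEig A := by
  rw [maxEig, setOf_mulVec_eq_smul_eq_spectrum]
  exact le_csSup A.finite_spectrum.bddAbove hμ

theorem posSemidef_maxEig_smul_one_sub {A : Matrix V V ℝ} (hA : A.IsHermitian) :
    (maxEig A • 1 - A).PosSemidef := by
  refine posSemidef_iff_isHermitian_and_spectrum_nonneg.mpr
    ⟨(isHermitian_one.smul (IsSelfAdjoint.all (maxEig A))).sub hA, ?_⟩
  rw [← Algebra.algebraMap_eq_smul_one, ← spectrum.singleton_sub_eq]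
  rintro _ ⟨_, rfl, μ, hμ, rfl⟩
  exact sub_nonneg.mpr (le_maxEig_of_mem_spectrum hμ)

theorem dotProduct_mulVec_le_maxEig_mul {A : Matrix V V ℝ} (hA : A.IsHermitian) (x : V → ℝ) :
    x ⬝ᵥ A *ᵥ x ≤ maxEig A * (x ⬝ᵥ x) := by
  have := (posSemidef_maxEig_smul_one_sub hA).dotProduct_mulVec_nonneg x
  rw [star_trivial, sub_mulVec, dotProduct_sub, smul_mulVec, one_mulVec, dotProduct_smul,
    smul_eq_mul] at this
  linarith

theorem mulVec_eq_maxEig_smul {A : Matrix V V ℝ} (hA : A.IsHermitian) {x : V → ℝ}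
    (hx : x ⬝ᵥ A *ᵥ x = maxEig A * (x ⬝ᵥ x)) : A *ᵥ x = maxEig A • x := by
  have := ((posSemidef_maxEig_smul_one_sub hA).dotProduct_mulVec_zero_iff x).mp (by
    rw [star_trivial, sub_mulVec, dotProduct_sub, smul_mulVec, one_mulVec, dotProduct_smul,
      smul_eq_mul, hx, sub_self])
  rw [sub_mulVec, smul_mulVec, one_mulVec, sub_eq_zero] at this
  exact this.symm

theorem lt_maxEig_of_le_dotProduct_mulVec {A : Matrix V V ℝ} (hA : A.IsHermitian)
    {x : V → ℝ} {μ : ℝ} (hle : μ * (x ⬝ᵥ x) ≤ x ⬝ᵥ A *ᵥ x) {a : V} (ha : 0 ≤ x a)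
    (hlt : μ * x a < (A *ᵥ x) a) :
    μ < maxEig A := by
  by_contra! hμ
  have hxx : 0 ≤ x ⬝ᵥ x := Finset.sum_nonneg fun i _ => mul_self_nonneg (x i)
  have hq := dotProduct_mulVec_le_maxEig_mul hA x
  have heig : A *ᵥ x = maxEig A • x :=
    mulVec_eq_maxEig_smul hA (le_antisymm hq (by nlinarith))
  rw [heig, Pi.smul_apply, smul_eq_mul] at hlt
  nlinarith

end Matrix

open Matrix

open scoped Classical in
theorem sLap_isHermitian {V : Type*} [Fintype V] (G : SimpleGraph V) : (sLap G).IsHermitian := by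
  ext a b
  by_cases h : a = b
  · subst h; rfl
  · simp [sLap, h, Ne.symm h, G.adj_comm]

open scoped Classical in
theorem sLap_mulVec_apply {V : Type*} [Fintype V] (G : SimpleGraph V) (x : V → ℝ) (a : V) :
    (sLap G *ᵥ x) a = ∑ b, if G.Adj a b then x a + x b else 0 := by
  have hdeg : (deg G a : ℝ) = ∑ b, if G.Adj a b then (1 : ℝ) else 0 := by
    rw [deg, Set.ncard_eq_toFinset_card', Finset.sum_boole]
    simp
  simp only [mulVec, dotProduct, sLap, add_mul, Finset.sum_add_distrib, ite_mul, zero_mul,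
    Finset.sum_ite_eq, Finset.mem_univ, if_true, hdeg, Finset.sum_mul, one_mul]
  rw [← Finset.sum_add_distrib]
  exact Finset.sum_congr rfl fun b _ => by split_ifs <;> simp

theorem deg_sup {V : Type*} [Finite V] {G H : SimpleGraph V} (h : Disjoint G H) (a : V) :
    deg (G ⊔ H) a = deg G a + deg H a := by
  rw [deg, neighborSet_sup, Set.ncard_union_eq ((disjoint_neighborSet.mpr h) a)]
  rfl

theorem sLap_sup {V : Type*} [Fintype V] {G H : SimpleGraph V} (h : Disjoint G H) :
    sLap (G ⊔ H) = sLap G + sLap H := by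
  ext a b
  have hGH : ¬ (G.Adj a b ∧ H.Adj a b) := fun hab => h.le_bot (show (G ⊓ H).Adj a b from hab)
  simp only [sLap, Matrix.add_apply, sup_adj, deg_sup h]
  split_ifs <;> simp_all

def starOn {V : Type*} (c : V) (W : Finset V) : SimpleGraph V :=
  fromEdgeSet {e | ∃ w ∈ W, e = s(c, w)}

section starOn

variable {V : Type*} {c : V} {W : Finset V}

theorem starOn_adj {a b : V} :
    (starOn c W).Adj a b ↔ (a = c ∧ b ∈ W ∨ b = c ∧ a ∈ W) ∧ a ≠ b := by
  refine Iff.trans (fromEdgeSet_adj _) (and_congr_left fun _ => ?_)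
  simp only [Set.mem_ofPred_eq, Sym2.eq_iff]
  constructor
  · rintro ⟨w, hw, ⟨rfl, rfl⟩ | ⟨rfl, rfl⟩⟩
    exacts [Or.inl ⟨rfl, hw⟩, Or.inr ⟨rfl, hw⟩]
  · rintro (⟨rfl, hb⟩ | ⟨rfl, ha⟩)
    exacts [⟨b, hb, Or.inl ⟨rfl, rfl⟩⟩, ⟨a, ha, Or.inr ⟨rfl, rfl⟩⟩]

theorem starOn_adj_of_notMem (hc : c ∉ W) {a b : V} :
    (starOn c W).Adj a b ↔ a = c ∧ b ∈ W ∨ b = c ∧ a ∈ W := by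
  rw [starOn_adj, and_iff_left_iff_imp]
  rintro (⟨rfl, hb⟩ | ⟨rfl, ha⟩) rfl <;> contradiction

theorem starOn_le {G : SimpleGraph V} (h : ∀ w ∈ W, G.Adj c w) : starOn c W ≤ G := by
  intro a b hab
  obtain ⟨⟨rfl, hb⟩ | ⟨rfl, ha⟩, -⟩ := starOn_adj.mp hab
  exacts [h b hb, (h a ha).symm]

theorem disjoint_starOn {G : SimpleGraph V} (h : ∀ w ∈ W, ¬ G.Adj c w) :
    Disjoint G (starOn c W) := by
  rw [← disjoint_neighborSet]
  refine fun a => Set.disjoint_left.mpr fun b hG hS => ?_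
  obtain ⟨⟨rfl, hb⟩ | ⟨rfl, ha⟩, -⟩ := starOn_adj.mp hS
  exacts [h b hb hG, h a ha hG.symm]

variable [Fintype V] [DecidableEq V]

theorem sLap_starOn_mulVec_apply (hc : c ∉ W) (x : V → ℝ) (a : V) :
    (sLap (starOn c W) *ᵥ x) a =
      (if a = c then ∑ w ∈ W, (x c + x w) else 0) + (if a ∈ W then x a + x c else 0) := by
  simp only [sLap_mulVec_apply, starOn_adj_of_notMem hc]
  by_cases hac : a = c
  · subst hac
    simp [hc]
  · by_cases haW : a ∈ W <;> simp [hac, haW]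

theorem dotProduct_sLap_starOn_mulVec (hc : c ∉ W) (x : V → ℝ) :
    x ⬝ᵥ sLap (starOn c W) *ᵥ x = ∑ w ∈ W, (x c + x w) ^ 2 := by
  simp only [dotProduct, sLap_starOn_mulVec_apply hc, mul_add, mul_ite, mul_zero,
    Finset.sum_add_distrib, Finset.sum_ite_eq', Finset.mem_univ, if_true, Finset.sum_ite_mem,
    Finset.univ_inter, Finset.mul_sum]
  rw [← Finset.sum_add_distrib, ← Finset.sum_add_distrib, ← Finset.sum_add_distrib]
  exact Finset.sum_congr rfl fun w _ => by ring

end starOn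

theorem sLap_deleteEdges_sup_starOn {V : Type*} [Fintype V] {G : SimpleGraph V} {u v : V}
    {W : Finset V} (hv : starOn v W ≤ G) (hu : Disjoint G (starOn u W)) :
    sLap (G.deleteEdges {e | ∃ w ∈ W, e = s(v, w)} ⊔ starOn u W) =
      sLap G - sLap (starOn v W) + sLap (starOn u W) := by
  have hG : sLap G = sLap (G.deleteEdges {e | ∃ w ∈ W, e = s(v, w)}) + sLap (starOn v W) := by
    -- `G.deleteEdges s` unfolds to `G \ fromEdgeSet s`, and here `fromEdgeSet s = starOn v W`.
    conv_lhs => rw [← sdiff_sup_cancel hv]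
    exact sLap_sup disjoint_sdiff_self_left
  rw [sLap_sup (hu.mono_left (G.deleteEdges_le _)), hG]
  abel

theorem stmt_9_general {V : Type*} [Fintype V] (G : SimpleGraph V)
    (x : V → ℝ) (hx : ∀ v, 0 < x v)
    (heig : (sLap G).mulVec x = maxEig (sLap G) • x)
    (u v : V) (hxuv : x v ≤ x u)
    (W : Finset V) (hW : W.Nonempty)
    (hWv : ↑W ⊆ G.neighborSet v \ (G.neighborSet u ∪ {u})) :
    maxEig (sLap G) <
      maxEig (sLap ((G.deleteEdges {e | ∃ w ∈ W, e = s(v, w)}) ⊔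
        SimpleGraph.fromEdgeSet {e | ∃ w ∈ W, e = s(u, w)})) := by
  classical
  have hWv' : ∀ w ∈ W, G.Adj v w ∧ w ≠ u ∧ ¬ G.Adj u w := fun w hw => by
    simpa using hWv hw
  obtain ⟨w₀, hw₀⟩ := hW
  have huv : u ≠ v := fun h => (hWv' w₀ hw₀).2.2 (h ▸ (hWv' w₀ hw₀).1)
  have hvW : v ∉ W := fun h => G.loopless.irrefl v (hWv' v h).1
  have huW : u ∉ W := fun h => (hWv' u h).2.1 rfl
  have hrot := sLap_deleteEdges_sup_starOn (starOn_le fun w hw => (hWv' w hw).1)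
    (disjoint_starOn fun w hw => (hWv' w hw).2.2)
  refine lt_maxEig_of_le_dotProduct_mulVec (sLap_isHermitian _) (a := u) ?_ (hx u).le ?_
  · change _ ≤ x ⬝ᵥ sLap (G.deleteEdges _ ⊔ starOn u W) *ᵥ x
    rw [hrot, add_mulVec, sub_mulVec, dotProduct_add, dotProduct_sub, heig,
      dotProduct_smul, smul_eq_mul, dotProduct_sLap_starOn_mulVec hvW,
      dotProduct_sLap_starOn_mulVec huW]
    have hgain : ∑ w ∈ W, (x v + x w) ^ 2 ≤ ∑ w ∈ W, (x u + x w) ^ 2 :=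
      Finset.sum_le_sum fun w _ => pow_le_pow_left₀ (add_pos (hx v) (hx w)).le (by linarith) 2
    linarith
  · change _ < (sLap (G.deleteEdges _ ⊔ starOn u W) *ᵥ x) u
    rw [hrot, add_mulVec, sub_mulVec, Pi.add_apply, Pi.sub_apply, heig,
      Pi.smul_apply, smul_eq_mul, sLap_starOn_mulVec_apply hvW, sLap_starOn_mulVec_apply huW]
    simp only [huv, huW, if_true, if_false, add_zero, sub_zero]
    exact lt_add_of_pos_right _ (Finset.sum_pos (fun w _ => by linarith [hx u, hx w]) ⟨w₀, hw₀⟩)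

/-- Hong–Zhang rotation lemma for the signless Laplacian: moving the edges `v wᵢ`
to `u wᵢ` (for `wᵢ ∈ N(v) \ (N(u) ∪ {u})`) strictly increases the signless Laplacian
spectral radius whenever `x_u ≥ x_v` for the Perron eigenvector `x`. -/
theorem stmt_9 {V : Type*} [Fintype V] (G : SimpleGraph V) (hG : G.Connected)
    (x : V → ℝ) (hx : ∀ v, 0 < x v)
    (heig : (sLap G).mulVec x = maxEig (sLap G) • x)
    (u v : V) (hxuv : x v ≤ x u)
    (W : Finset V) (hW : W.Nonempty) (hWs : W.card ≤ deg G v)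
    (hWv : ↑W ⊆ G.neighborSet v \ (G.neighborSet u ∪ {u})) :
    maxEig (sLap G) <
      maxEig (sLap ((G.deleteEdges {e | ∃ w ∈ W, e = s(v, w)}) ⊔
        SimpleGraph.fromEdgeSet {e | ∃ w ∈ W, e = s(u, w)})) :=
  stmt_9_general G x hx heig u v hxuv W hW hWv
end
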